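/- arXiv:2602.16384 — 5 statements merged into one kernel-verified Lean document; each statement's English description precedes it below -/
import Mathlib

section
/- Let F be a non-archimedean local field of residue cardinality ℓ, with Haar probability measure on O_F and valuation val. Let f ∈ O_{F̄}[x] be a monic polynomial with coefficients in the ring of integers of the algebraic closure. Then ∫_{O_F} val(f(x)) dx ≤ deg(f)/(ℓ-1). -/
open MeasureTheory
open scoped ENNReal

/-! Over the algebraically closed field, `f = ∏ (X - a)`, so the positive part of `val (f x)` is at
most the sum of those of `val (x - a)`; positive parts also absorb the junk value `logb 0 = 0` at
roots of `f`. For a single `a`, `∫ val (x - a) ≤ ∑_{m ≥ 0} μ {val (x - a) > m}`. The set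
`{‖x - a‖ < ℓ ^ (-m)}` has all its mutual distances `< ℓ ^ (-m)`, hence `≤ ℓ ^ (-m-1)` since the
norm is discrete, so its part in `O_F` lies in one ball of measure `ℓ ^ (-m-1)`. The geometric
series gives `1 / (ℓ - 1)` per root. -/

theorem ENNReal.le_tsum_ite_natCast_lt (t : ℝ≥0∞) :
    t ≤ ∑' n : ℕ, if (n : ℝ≥0∞) < t then 1 else 0 := by
  rcases eq_or_ne t ⊤ with rfl | ht
  · simp
  lift t to NNReal using ht
  calc (t : ℝ≥0∞) ≤ ⌈t⌉₊ := by exact_mod_cast Nat.le_ceil t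
    _ = ∑ n ∈ Finset.range ⌈t⌉₊, if (n : ℝ≥0∞) < t then 1 else 0 := by
      rw [Finset.sum_congr rfl fun n hn => if_pos ?_]
      · simp
      · exact_mod_cast Nat.lt_ceil.mp (Finset.mem_range.mp hn)
    _ ≤ _ := ENNReal.sum_le_tsum _

theorem MeasureTheory.lintegral_le_tsum_measure_natCast_lt {α : Type*} [MeasurableSpace α]
    {μ : Measure α} {f : α → ℝ≥0∞} (hf : Measurable f) :
    ∫⁻ x, f x ∂μ ≤ ∑' n : ℕ, μ {x | (n : ℝ≥0∞) < f x} := by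
  have hmeas (n : ℕ) : MeasurableSet {x | (n : ℝ≥0∞) < f x} := measurableSet_lt measurable_const hf
  calc ∫⁻ x, f x ∂μ ≤ ∫⁻ x, ∑' n : ℕ, {x | (n : ℝ≥0∞) < f x}.indicator 1 x ∂μ := by
        refine lintegral_mono fun x => ?_
        simpa [Set.indicator_apply] using ENNReal.le_tsum_ite_natCast_lt (f x)
    _ = ∑' n : ℕ, μ {x | (n : ℝ≥0∞) < f x} := by
        rw [lintegral_tsum fun n => (measurable_one.indicator (hmeas n)).aemeasurable]
        simp_rw [lintegral_indicator_one (hmeas _)]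

theorem ENNReal.tsum_natCast_zpow_neg_succ {ℓ : ℕ} (hℓ : 1 < ℓ) :
    ∑' m : ℕ, (ℓ : ℝ≥0∞) ^ (-((m + 1 : ℕ) : ℤ)) = ENNReal.ofReal (1 / ((ℓ : ℝ) - 1)) := by
  have hℓ' : 1 < (ℓ : ℝ) := by exact_mod_cast hℓ
  have hinv : (ℓ : ℝ≥0∞)⁻¹ = ENNReal.ofReal (ℓ : ℝ)⁻¹ := by
    rw [ENNReal.ofReal_inv_of_pos (by linarith), ENNReal.ofReal_natCast]
  simp_rw [ENNReal.zpow_neg, zpow_natCast, ENNReal.inv_pow]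
  rw [ENNReal.tsum_geometric_add_one, hinv, ← ENNReal.ofReal_one,
    ← ENNReal.ofReal_sub _ (by positivity), ← ENNReal.ofReal_inv_of_pos,
    ← ENNReal.ofReal_mul (by positivity)]
  · congr 1
    field_simp
  · rw [sub_pos]
    exact inv_lt_one_of_one_lt₀ hℓ'

theorem norm_le_zpow_sub_one_of_norm_lt_zpow {E : Type*} [SeminormedAddGroup E] {b : ℝ}
    (hb : 1 < b)(hdisc : ∀ x : E, x ≠ 0 → ∃ k : ℤ, ‖x‖ = b ^ k) {x : E} {k : ℤ}
    (hx : ‖x‖ < b ^ k) : ‖x‖ ≤ b ^ (k - 1) := by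
  rcases eq_or_ne x 0 with rfl | hx0
  · simpa using zpow_nonneg (zero_le_one.trans hb.le) _
  obtain ⟨j, hj⟩ := hdisc x hx0
  rw [hj] at hx ⊢
  exact zpow_le_zpow_right₀ hb.le (Int.le_sub_one_of_lt ((zpow_lt_zpow_iff_right₀ hb).mp hx))

theorem Real.lt_zpow_neg_of_natCast_lt_ofReal_neg_logb {b r : ℝ} (hb : 1 < b) (hr : 0 ≤ r)
    {m : ℕ} (h : (m : ℝ≥0∞) < ENNReal.ofReal (-Real.logb b r)) : r < b ^ (-(m : ℤ)) := by
  rw [← ENNReal.ofReal_natCast, ENNReal.ofReal_lt_ofReal_iff'] at h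
  rcases hr.eq_or_lt with rfl | hr
  · exact zpow_pos (zero_lt_one.trans hb) _
  rw [← Real.rpow_intCast, Int.cast_neg, Int.cast_natCast, ← Real.logb_lt_iff_lt_rpow hb hr]
  linarith [h.1]

theorem measure_le_of_norm_sub_lt {F : Type*} [NormedField F] [MeasurableSpace F] [BorelSpace F]
    {ℓ : ℕ} (hℓ : 1 < ℓ) (hdisc : ∀ x : F, x ≠ 0 → ∃ k : ℤ, ‖x‖ = (ℓ : ℝ) ^ k)
    {μ : Measure F} [IsProbabilityMeasure μ]
    (hball : ∀ (m : ℕ) (a : F), ‖a‖ ≤ 1 →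
      μ {x : F | ‖x - a‖ ≤ (ℓ : ℝ) ^ (-(m : ℤ))} = (ℓ : ENNReal) ^ (-(m : ℤ)))
    {m : ℕ} {S : Set F} (hS : ∀ x ∈ S, ∀ y ∈ S, ‖x - y‖ < (ℓ : ℝ) ^ (-(m : ℤ))) :
    μ S ≤ (ℓ : ℝ≥0∞) ^ (-((m + 1 : ℕ) : ℤ)) := by
  by_cases hint : ∃ a ∈ S, ‖a‖ ≤ 1
  · obtain ⟨a, haS, ha⟩ := hint
    rw [← hball (m + 1) a ha]
    refine measure_mono fun x hx => ?_
    have := norm_le_zpow_sub_one_of_norm_lt_zpow (by exact_mod_cast hℓ) hdisc (hS x hx a haS)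
    simpa [sub_eq_add_neg, add_comm] using this
  · have hunit : μ {x : F | ‖x‖ ≤ 1}ᶜ = 0 := by
      rw [prob_compl_eq_zero_iff (measurableSet_le measurable_norm measurable_const)]
      simpa using hball 0 0 (by simp)
    simp only [not_exists, not_and, not_le] at hint
    exact (measure_mono_null (fun x hx => (hint x hx).not_ge) hunit).trans_le zero_le

theorem ENNReal.ofReal_neg_logb_mul_le (b x y : ℝ) :
    ENNReal.ofReal (-Real.logb b (x * y)) ≤
      ENNReal.ofReal (-Real.logb b x) + ENNReal.ofReal (-Real.logb b y) := by
  rcases eq_or_ne x 0 with rfl | hx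
  · simp
  rcases eq_or_ne y 0 with rfl | hy
  · simp
  rw [Real.logb_mul hx hy, neg_add]
  exact ENNReal.ofReal_add_le

theorem ENNReal.ofReal_neg_logb_multiset_prod_le (b : ℝ) (s : Multiset ℝ) :
    ENNReal.ofReal (-Real.logb b s.prod) ≤
      (s.map fun r => ENNReal.ofReal (-Real.logb b r)).sum := by
  induction s using Multiset.induction with
  | empty => simp
  | cons a s ih =>
    rw [Multiset.prod_cons, Multiset.map_cons, Multiset.sum_cons]
    exact (ENNReal.ofReal_neg_logb_mul_le b a s.prod).trans (by gcongr)

theorem MeasureTheory.lintegral_multiset_sum {α ι : Type*} [MeasurableSpace α] (μ : Measure α)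
    (s : Multiset ι) {f : ι → α → ℝ≥0∞} (hf : ∀ i ∈ s, Measurable (f i)) :
    ∫⁻ x, (s.map fun i => f i x).sum ∂μ = (s.map fun i => ∫⁻ x, f i x ∂μ).sum := by
  induction s using Multiset.induction with
  | empty => simp
  | cons a s ih =>
    simp only [Multiset.map_cons, Multiset.sum_cons]
    rw [lintegral_add_left (hf a (Multiset.mem_cons_self a s)),
      ih fun i hi => hf i (Multiset.mem_cons_of_mem hi)]

theorem MeasureTheory.integral_le_of_lintegral_ofReal_le {α : Type*} [MeasurableSpace α]
    {μ : Measure α} {f : α → ℝ} {c : ℝ} (hc : 0 ≤ c)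
    (h : ∫⁻ x, ENNReal.ofReal (f x) ∂μ ≤ ENNReal.ofReal c) : ∫ x, f x ∂μ ≤ c := by
  by_cases hfi : Integrable f μ
  · rw [integral_eq_lintegral_pos_part_sub_lintegral_neg_part hfi]
    exact (sub_le_self _ ENNReal.toReal_nonneg).trans (ENNReal.toReal_le_of_le_ofReal hc h)
  · rwa [integral_undef hfi]

theorem measurable_ofReal_neg_logb_norm_sub {F K : Type*} [TopologicalSpace F]
    [MeasurableSpace F] [OpensMeasurableSpace F] [NormedField K] {ι : F → K} (hι : Continuous ι)
    (b : ℝ) (a : K) :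
    Measurable fun x => ENNReal.ofReal (-Real.logb b ‖ι x - a‖) := by
  have : Measurable fun x => ‖ι x - a‖ := (hι.sub continuous_const).norm.measurable
  unfold Real.logb
  fun_prop

theorem lintegral_ofReal_neg_logb_norm_sub_le {F K : Type*} [NormedField F] [MeasurableSpace F]
    [BorelSpace F] [NormedField K] [IsUltrametricDist K]
    {ℓ : ℕ} (hℓ : 1 < ℓ) (hdisc : ∀ x : F, x ≠ 0 → ∃ k : ℤ, ‖x‖ = (ℓ : ℝ) ^ k)
    (ι : F →+* K) (hι : ∀ x : F, ‖ι x‖ = ‖x‖) {μ : Measure F} [IsProbabilityMeasure μ]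
    (hball : ∀ (m : ℕ) (a : F), ‖a‖ ≤ 1 →
      μ {x : F | ‖x - a‖ ≤ (ℓ : ℝ) ^ (-(m : ℤ))} = (ℓ : ENNReal) ^ (-(m : ℤ)))
    (a : K) :
    ∫⁻ x, ENNReal.ofReal (-Real.logb ℓ ‖ι x - a‖) ∂μ ≤ ENNReal.ofReal (1 / ((ℓ : ℝ) - 1)) := by
  have hlevel (m : ℕ) : μ {x | (m : ℝ≥0∞) < ENNReal.ofReal (-Real.logb ℓ ‖ι x - a‖)} ≤
      (ℓ : ℝ≥0∞) ^ (-((m + 1 : ℕ) : ℤ)) := by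
    refine measure_le_of_norm_sub_lt hℓ hdisc hball fun x hx y hy => ?_
    have hℓ' : 1 < (ℓ : ℝ) := by exact_mod_cast hℓ
    replace hx := Real.lt_zpow_neg_of_natCast_lt_ofReal_neg_logb hℓ' (norm_nonneg _) hx
    replace hy := Real.lt_zpow_neg_of_natCast_lt_ofReal_neg_logb hℓ' (norm_nonneg _) hy
    rw [← hι, map_sub, ← dist_eq_norm]
    refine (dist_triangle_max _ a _).trans_lt (max_lt ?_ ?_)
    · rwa [dist_eq_norm]
    · rwa [dist_comm, dist_eq_norm]
  calc ∫⁻ x, ENNReal.ofReal (-Real.logb ℓ ‖ι x - a‖) ∂μ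
      ≤ ∑' m : ℕ, μ {x | (m : ℝ≥0∞) < ENNReal.ofReal (-Real.logb ℓ ‖ι x - a‖)} :=
        lintegral_le_tsum_measure_natCast_lt <| measurable_ofReal_neg_logb_norm_sub
          (AddMonoidHomClass.isometry_of_norm ι hι).continuous _ _
    _ ≤ ∑' m : ℕ, (ℓ : ℝ≥0∞) ^ (-((m + 1 : ℕ) : ℤ)) := ENNReal.tsum_le_tsum hlevel
    _ = ENNReal.ofReal (1 / ((ℓ : ℝ) - 1)) := ENNReal.tsum_natCast_zpow_neg_succ hℓ

theorem Polynomial.Splits.ofReal_neg_logb_norm_eval_le {K : Type*} [NormedField K]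
    {f : Polynomial K} (hsplit : f.Splits) (hf : f.Monic) (b : ℝ) (y : K) :
    ENNReal.ofReal (-Real.logb b ‖f.eval y‖) ≤
      (f.roots.map fun a => ENNReal.ofReal (-Real.logb b ‖y - a‖)).sum := by
  rw [hsplit.eval_eq_prod_roots_of_monic hf, ← normHom_apply, map_multiset_prod, Multiset.map_map]
  simpa [Multiset.map_map] using
    ENNReal.ofReal_neg_logb_multiset_prod_le b (f.roots.map fun a => ‖y - a‖)

theorem integral_val_poly_le_general (ℓ : ℕ) (hℓ : 2 ≤ ℓ)
    {F K : Type*} [NormedField F]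
    [NormedField K] [IsUltrametricDist K] [IsAlgClosed K]
    [MeasurableSpace F] [BorelSpace F]
    (hdisc : ∀ x : F, x ≠ 0 → ∃ k : ℤ, ‖x‖ = (ℓ : ℝ) ^ k)
    (ι : F →+* K) (hι : ∀ x : F, ‖ι x‖ = ‖x‖)
    (μ : Measure F) [IsProbabilityMeasure μ]
    (hball : ∀ (m : ℕ) (a : F), ‖a‖ ≤ 1 →
      μ {x : F | ‖x - a‖ ≤ (ℓ : ℝ) ^ (-(m : ℤ))} = (ℓ : ENNReal) ^ (-(m : ℤ)))
    (f : Polynomial K) (hf : f.Monic) :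
    ∫ x, (-Real.logb ℓ ‖f.eval (ι x)‖) ∂μ ≤ (f.natDegree : ℝ) / ((ℓ : ℝ) - 1) := by
  have hℓ1 : 1 < (ℓ : ℝ) := by exact_mod_cast hℓ
  refine integral_le_of_lintegral_ofReal_le (by bound) ?_
  calc ∫⁻ x, ENNReal.ofReal (-Real.logb ℓ ‖f.eval (ι x)‖) ∂μ
      ≤ ∫⁻ x, (f.roots.map fun a => ENNReal.ofReal (-Real.logb ℓ ‖ι x - a‖)).sum ∂μ :=
        lintegral_mono fun x => (IsAlgClosed.splits f).ofReal_neg_logb_norm_eval_le hf _ _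
    _ = (f.roots.map fun a => ∫⁻ x, ENNReal.ofReal (-Real.logb ℓ ‖ι x - a‖) ∂μ).sum :=
        lintegral_multiset_sum μ _ fun a _ => measurable_ofReal_neg_logb_norm_sub
          (AddMonoidHomClass.isometry_of_norm ι hι).continuous _ _
    _ ≤ (f.roots.map fun _ => ENNReal.ofReal (1 / ((ℓ : ℝ) - 1))).sum :=
        Multiset.sum_map_le_sum_map _ _ fun a _ =>
          lintegral_ofReal_neg_logb_norm_sub_le (by omega) hdisc ι hι hball a
    _ = ENNReal.ofReal ((f.natDegree : ℝ) / ((ℓ : ℝ) - 1)) := by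
        rw [Multiset.map_const', Multiset.sum_replicate, IsAlgClosed.card_roots_eq_natDegree,
          nsmul_eq_mul, ← ENNReal.ofReal_natCast, ← ENNReal.ofReal_mul (by positivity), mul_one_div]

/-- Let `F` be a non-archimedean local field of residue cardinality `ℓ`
(abstracted: an ultrametric normed field with discrete value group generated by `ℓ`,
with Haar probability measure `μ` on the unit ball `O_F`, normalized so that a ball of
radius `ℓ^{-m}` has measure `ℓ^{-m}`), isometrically embedded via `ι` into an
algebraically closed ultrametric normed field `K`. If `f` is a monic polynomial with
coefficients in the valuation ring of `K`, then `∫_{O_F} val(f(x)) dx ≤ deg(f)/(ℓ-1)`,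
where `val(y) = -log_ℓ ‖y‖`. -/
theorem integral_val_poly_le (ℓ : ℕ) (hℓ : 2 ≤ ℓ)
    {F K : Type*} [NormedField F] [IsUltrametricDist F]
    [NormedField K] [IsUltrametricDist K] [IsAlgClosed K]
    [MeasurableSpace F] [BorelSpace F]
    (hdisc : ∀ x : F, x ≠ 0 → ∃ k : ℤ, ‖x‖ = (ℓ : ℝ) ^ k)
    (ι : F →+* K) (hι : ∀ x : F, ‖ι x‖ = ‖x‖)
    (μ : Measure F) [IsProbabilityMeasure μ]
    (hball : ∀ (m : ℕ) (a : F), ‖a‖ ≤ 1 →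
      μ {x : F | ‖x - a‖ ≤ (ℓ : ℝ) ^ (-(m : ℤ))} = (ℓ : ENNReal) ^ (-(m : ℤ)))
    (f : Polynomial K) (hf : f.Monic) (hcoeff : ∀ i, ‖f.coeff i‖ ≤ 1) :
    ∫ x, (-Real.logb ℓ ‖f.eval (ι x)‖) ∂μ ≤ (f.natDegree : ℝ) / ((ℓ : ℝ) - 1) :=
  integral_val_poly_le_general ℓ hℓ hdisc ι hι μ hball f hf
end

section
/- Let F be a non-archimedean local field of residue cardinality ℓ, and let m: F × F → F be the multiplication map. Let μ be the Haar probability measure on O_F × O_F. Then the pushforward m_*(μ) is absolutely continuous with respect to the Haar measure μ_F on F normalized so that μ_F(O_F)=1, with density r(z) = ((ℓ-1)/ℓ)·(val(z)+1) for z ∈ O_F \ {0}, and the pushforward is supported on O_F. -/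
/-!
Balls of radius `ℓ ^ k` form a π-system generating the Borel σ-algebra, so a measure is
determined by its values on them. Hence `μ` is `ν` restricted to `O_F`, and for `w ≠ 0` the
map `z ↦ w * z` scales `ν` by `‖w‖⁻¹`. Fibering `μ ⊗ μ` over the first factor and swapping the
integrals (Tonelli), `m_*(μ ⊗ μ)` has density `z ↦ ∫_{‖w‖ ≥ ‖z‖} ‖w‖⁻¹ dμ(w)`. When
`‖z‖ = ℓ ^ (-r) ≤ 1` this domain is the union of the spheres `‖w‖ = ℓ ^ (-j)`, `0 ≤ j ≤ r`, each
contributing `ℓ ^ j · ν(sphere) = 1 - 1/ℓ`, which gives `(1 - 1/ℓ)(val z + 1)`.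
-/

open MeasureTheory Metric Set TopologicalSpace
open scoped ENNReal

def zpowClosedBalls (X : Type*) [PseudoMetricSpace X] (q : ℝ) : Set (Set X) :=
  {s | ∃ (a : X) (k : ℤ), s = closedBall a (q ^ k)}

section ZPowClosedBalls

variable {X : Type*} [PseudoMetricSpace X] [IsUltrametricDist X]

lemma isPiSystem_zpowClosedBalls (q : ℝ) : IsPiSystem (zpowClosedBalls X q) := by
  rintro _ ⟨a, k, rfl⟩ _ ⟨b, j, rfl⟩ ⟨c, hca, hcb⟩
  rw [IsUltrametricDist.closedBall_eq_of_mem hca, IsUltrametricDist.closedBall_eq_of_mem hcb]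
  rcases le_total (q ^ k) (q ^ j) with h | h
  · exact ⟨c, k, inter_eq_left.2 (closedBall_subset_closedBall h)⟩
  · exact ⟨c, j, inter_eq_right.2 (closedBall_subset_closedBall h)⟩

lemma isTopologicalBasis_zpowClosedBalls (hq : 1 < q) :
    IsTopologicalBasis (zpowClosedBalls X q) := by
  refine isTopologicalBasis_of_isOpen_of_nhds ?_ fun x u hxu hu => ?_
  · rintro _ ⟨a, k, rfl⟩
    exact IsUltrametricDist.isOpen_closedBall a (zpow_pos (zero_lt_one.trans hq) k).ne'
  · obtain ⟨n, -, hn⟩ := (nhds_basis_closedBall_pow (inv_pos.2 (zero_lt_one.trans hq))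
      (inv_lt_one_of_one_lt₀ hq)).mem_iff.1 (hu.mem_nhds hxu)
    refine ⟨closedBall x (q ^ (-(n : ℤ))), ⟨x, _, rfl⟩, mem_closedBall_self (by positivity), ?_⟩
    rwa [zpow_neg, zpow_natCast, ← inv_pow]

lemma borel_eq_generateFrom_zpowClosedBalls [SecondCountableTopology X] (hq : 1 < q) :
    borel X = MeasurableSpace.generateFrom (zpowClosedBalls X q) :=
  (isTopologicalBasis_zpowClosedBalls hq).borel_eq_generateFrom

variable [MeasurableSpace X]

def MeasureTheory.Measure.finiteSpanningSetsInZPowClosedBalls (hq : 1 < q) (x : X) {μ : Measure X}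
    (hμ : ∀ k : ℤ, μ (closedBall x (q ^ k)) ≠ ∞) :
    μ.FiniteSpanningSetsIn (zpowClosedBalls X q) where
  set n := closedBall x (q ^ (n : ℤ))
  set_mem n := ⟨x, n, rfl⟩
  finite n := (hμ n).lt_top
  spanning := eq_univ_of_forall fun y => mem_iUnion.2 <|
    (pow_unbounded_of_one_lt (dist y x) hq).imp fun n hn => by
      simpa only [zpow_natCast] using mem_closedBall.2 hn.le

lemma MeasureTheory.Measure.ext_of_zpowClosedBalls [BorelSpace X] [SecondCountableTopology X]
    (hq : 1 < q) (x : X) {μ ν : Measure X} (hμ : ∀ k : ℤ, μ (closedBall x (q ^ k)) ≠ ∞)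
    (h : ∀ (a : X) (k : ℤ), μ (closedBall a (q ^ k)) = ν (closedBall a (q ^ k))) : μ = ν :=
  (finiteSpanningSetsInZPowClosedBalls hq x hμ).ext
    ((BorelSpace.measurable_eq).trans (borel_eq_generateFrom_zpowClosedBalls hq))
    (isPiSystem_zpowClosedBalls q) (by rintro _ ⟨a, k, rfl⟩; exact h a k)

end ZPowClosedBalls

section NormedGroup

variable {E : Type*} [NormedAddCommGroup E] {q : ℝ}

lemma zpow_le_norm_iff_zpow_sub_one_lt (hq : 1 < q)
    (hdisc : ∀ x : E, x ≠ 0 → ∃ k : ℤ, ‖x‖ = q ^ k) (x : E) (k : ℤ) :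
    q ^ k ≤ ‖x‖ ↔ q ^ (k - 1) < ‖x‖ := by
  refine ⟨(zpow_lt_zpow_right₀ hq (sub_one_lt k)).trans_le, fun h => ?_⟩
  have hx : x ≠ 0 := by
    rintro rfl
    exact (norm_zero (E := E) ▸ h).not_ge (zpow_pos (zero_lt_one.trans hq) _).le
  obtain ⟨t, ht⟩ := hdisc x hx
  rw [ht] at h ⊢
  have := (zpow_lt_zpow_iff_right₀ hq).1 h
  exact zpow_le_zpow_right₀ hq.le (by omega)

lemma sphere_zpow_eq_closedBall_diff (hq : 1 < q)
    (hdisc : ∀ x : E, x ≠ 0 → ∃ k : ℤ, ‖x‖ = q ^ k) (k : ℤ) :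
    sphere (0 : E) (q ^ k) = closedBall 0 (q ^ k) \ closedBall 0 (q ^ (k - 1)) := by
  ext x
  rw [mem_sphere_zero_iff_norm, mem_sdiff, mem_closedBall_zero_iff, mem_closedBall_zero_iff,
    not_le, ← zpow_le_norm_iff_zpow_sub_one_lt hq hdisc, le_antisymm_iff]

variable [MeasurableSpace E] {ν : Measure E}

lemma measure_singleton_zero_of_closedBall_zpow (hq : 1 < q)
    (hν : ∀ k : ℤ, ν (closedBall 0 (q ^ k)) = ENNReal.ofReal (q ^ k)) : ν {0} = 0 := by
  have hlim : Filter.Tendsto (fun n : ℕ => ENNReal.ofReal (q⁻¹ ^ n)) Filter.atTop (nhds 0) := by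
    simpa using ENNReal.tendsto_ofReal (tendsto_pow_atTop_nhds_zero_of_lt_one
      (inv_nonneg.2 (zero_lt_one.trans hq).le) (inv_lt_one_of_one_lt₀ hq))
  refine le_antisymm (ge_of_tendsto' hlim fun n => ?_) bot_le
  rw [inv_pow, ← zpow_natCast, ← zpow_neg, ← hν]
  exact measure_mono (singleton_subset_iff.2 (mem_closedBall_self (by positivity)))

variable [BorelSpace E]

lemma measure_sphere_zpow (hq : 1 < q) (hdisc : ∀ x : E, x ≠ 0 → ∃ k : ℤ, ‖x‖ = q ^ k)
    (hν : ∀ k : ℤ, ν (closedBall 0 (q ^ k)) = ENNReal.ofReal (q ^ k)) (k : ℤ) :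
    ν (sphere 0 (q ^ k)) = ENNReal.ofReal (q ^ k - q ^ (k - 1)) := by
  rw [sphere_zpow_eq_closedBall_diff hq hdisc, measure_sdiff
    (closedBall_subset_closedBall (zpow_le_zpow_right₀ hq.le (sub_one_lt k).le))
    measurableSet_closedBall.nullMeasurableSet (by rw [hν]; exact ENNReal.ofReal_ne_top),
    hν, hν, ENNReal.ofReal_sub _ (zpow_pos (zero_lt_one.trans hq) _).le]

lemma setLIntegral_sphere_zpow_enorm_inv (hq : 1 < q)
    (hdisc : ∀ x : E, x ≠ 0 → ∃ k : ℤ, ‖x‖ = q ^ k)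
    (hν : ∀ k : ℤ, ν (closedBall 0 (q ^ k)) = ENNReal.ofReal (q ^ k)) (k : ℤ) :
    ∫⁻ x in sphere 0 (q ^ k), ‖x‖ₑ⁻¹ ∂ν = ENNReal.ofReal ((q - 1) / q) := by
  have hq0 : 0 < q := zero_lt_one.trans hq
  rw [setLIntegral_congr_fun isClosed_sphere.measurableSet (g := fun _ => ENNReal.ofReal (q ^ k)⁻¹)
      fun x hx => by rw [← ofReal_norm, mem_sphere_zero_iff_norm.1 hx,
        ENNReal.ofReal_inv_of_pos (zpow_pos hq0 k)],
    setLIntegral_const, measure_sphere_zpow hq hdisc hν, ← ENNReal.ofReal_mul (by positivity)]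
  congr 1
  rw [zpow_sub_one₀ hq0.ne']
  field_simp

lemma setLIntegral_enorm_inv_zpow_le_norm (hq : 1 < q)
    (hdisc : ∀ x : E, x ≠ 0 → ∃ k : ℤ, ‖x‖ = q ^ k)
    (hν : ∀ k : ℤ, ν (closedBall 0 (q ^ k)) = ENNReal.ofReal (q ^ k)) (r : ℕ) :
    ∫⁻ x in {x | q ^ (-(r : ℤ)) ≤ ‖x‖} ∩ closedBall 0 1, ‖x‖ₑ⁻¹ ∂ν
      = ENNReal.ofReal ((q - 1) / q * (r + 1)) := by
  induction r with
  | zero =>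
    have hS : {x : E | q ^ (-((0 : ℕ) : ℤ)) ≤ ‖x‖} ∩ closedBall 0 1 = sphere 0 (q ^ (0 : ℤ)) := by
      ext x
      simp [and_comm, le_antisymm_iff]
    rw [hS, setLIntegral_sphere_zpow_enorm_inv hq hdisc hν]
    simp
  | succ r ih =>
    have hS : {x : E | q ^ (-((r + 1 : ℕ) : ℤ)) ≤ ‖x‖} ∩ closedBall 0 1
        = ({x | q ^ (-(r : ℤ)) ≤ ‖x‖} ∩ closedBall 0 1) ∪ sphere 0 (q ^ (-((r + 1 : ℕ) : ℤ))) := by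
      ext x
      have hk : -((r + 1 : ℕ) : ℤ) = -(r : ℤ) - 1 := by push_cast; ring
      have h1 : q ^ (-((r + 1 : ℕ) : ℤ)) ≤ 1 := zpow_le_one_of_nonpos₀ hq.le (by omega)
      simp only [mem_inter_iff, mem_union, mem_ofPred_eq, mem_closedBall_zero_iff,
        mem_sphere_zero_iff_norm, zpow_le_norm_iff_zpow_sub_one_lt hq hdisc x (-(r : ℤ)), ← hk]
      constructor
      · rintro ⟨hle, h1'⟩
        rcases hle.lt_or_eq with hlt | heq
        · exact Or.inl ⟨hlt, h1'⟩
        · exact Or.inr heq.symm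
      · rintro (⟨hlt, h1'⟩ | heq)
        · exact ⟨hlt.le, h1'⟩
        · exact ⟨heq.ge, heq ▸ h1⟩
    have hdisj : Disjoint ({x : E | q ^ (-(r : ℤ)) ≤ ‖x‖} ∩ closedBall 0 1)
        (sphere 0 (q ^ (-((r + 1 : ℕ) : ℤ)))) := by
      refine disjoint_left.2 fun x hx hx' => (zpow_lt_zpow_right₀ hq (by omega :
        -((r + 1 : ℕ) : ℤ) < -(r : ℤ))).not_ge ?_
      rw [← mem_sphere_zero_iff_norm.1 hx']
      exact hx.1
    rw [hS, lintegral_union isClosed_sphere.measurableSet hdisj, ih,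
      setLIntegral_sphere_zpow_enorm_inv hq hdisc hν,
      ← ENNReal.ofReal_add (by positivity) (by positivity)]
    congr 1
    push_cast
    ring

lemma setLIntegral_enorm_inv_norm_le_ae_eq (hq : 1 < q)
    (hdisc : ∀ x : E, x ≠ 0 → ∃ k : ℤ, ‖x‖ = q ^ k)
    (hν : ∀ k : ℤ, ν (closedBall 0 (q ^ k)) = ENNReal.ofReal (q ^ k)) :
    (fun z => ∫⁻ w in {w | ‖z‖ ≤ ‖w‖}, ‖w‖ₑ⁻¹ ∂(ν.restrict (closedBall 0 1))) =ᵐ[ν]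
      indicator {z | ‖z‖ ≤ 1 ∧ z ≠ 0}
        (fun z => ENNReal.ofReal ((q - 1) / q * (-Real.logb q ‖z‖ + 1))) := by
  filter_upwards [compl_mem_ae_iff.2 (measure_singleton_zero_of_closedBall_zpow hq hν)]
    with z (hz : z ≠ 0)
  rw [Measure.restrict_restrict (measurableSet_le measurable_const measurable_norm)]
  by_cases hz1 : ‖z‖ ≤ 1
  · obtain ⟨t, ht⟩ := hdisc z hz
    obtain ⟨r, rfl⟩ : ∃ r : ℕ, t = -r :=
      ⟨(-t).toNat, by have := (zpow_le_one_iff_right₀ hq).1 (ht ▸ hz1); omega⟩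
    rw [indicator_of_mem (show z ∈ {z : E | ‖z‖ ≤ 1 ∧ z ≠ 0} from ⟨hz1, hz⟩), ht,
      setLIntegral_enorm_inv_zpow_le_norm hq hdisc hν,
      ← Real.rpow_intCast, Real.logb_rpow (zero_lt_one.trans hq) hq.ne']
    push_cast
    ring_nf
  · rw [indicator_of_notMem (fun h => hz1 h.1)]
    refine setLIntegral_measure_zero _ _ ?_
    rw [← measure_empty (μ := ν)]
    congr 1
    exact eq_empty_of_forall_notMem fun w hw => hz1 (hw.1.trans (mem_closedBall_zero_iff.1 hw.2))

lemma eq_restrict_closedBall_one_of_zpow [IsUltrametricDist E] [SecondCountableTopology E] (hq : 1 < q)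
    {μ : Measure E} [IsProbabilityMeasure μ]
    (hμ : ∀ (n : ℕ) (a : E), ‖a‖ ≤ 1 →
      μ (closedBall a (q ^ (-(n : ℤ)))) = ENNReal.ofReal (q ^ (-(n : ℤ))))
    (hν : ∀ (a : E) (k : ℤ), ν (closedBall a (q ^ k)) = ENNReal.ofReal (q ^ k)) :
    μ = ν.restrict (closedBall 0 1) := by
  have hμO : μ (closedBall 0 1) = 1 := by simpa using hμ 0 0
  have hνO : ν (closedBall 0 1) = 1 := by simpa using hν 0 0
  refine Measure.ext_of_zpowClosedBalls hq 0 (fun k => measure_ne_top μ _) fun a k => ?_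
  rw [Measure.restrict_apply measurableSet_closedBall]
  have hsup : closedBall 0 1 ⊆ closedBall a (q ^ k) →
      μ (closedBall a (q ^ k)) = ν (closedBall a (q ^ k) ∩ closedBall 0 1) := fun h => by
    rw [inter_eq_right.2 h, hνO]
    exact le_antisymm prob_le_one (hμO ▸ measure_mono h)
  rcases IsUltrametricDist.closedBall_subset_trichotomy (x := a) (y := 0) (r := q ^ k) (s := 1)
    with h | h | h
  · rcases le_or_gt k 0 with hk | hk
    · obtain ⟨n, rfl⟩ : ∃ n : ℕ, k = -n := ⟨(-k).toNat, by omega⟩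
      rw [inter_eq_left.2 h, hν,
        hμ n a (mem_closedBall_zero_iff.1 (h (mem_closedBall_self (by positivity))))]
    · refine hsup ?_
      rw [IsUltrametricDist.closedBall_eq_of_mem (h (mem_closedBall_self (by positivity)))]
      exact closedBall_subset_closedBall (one_le_zpow₀ hq.le hk.le)
  · exact hsup h
  · rw [h.inter_eq, measure_empty]
    exact measure_mono_null h.subset_compl_right
      ((prob_compl_eq_zero_iff measurableSet_closedBall).2 hμO)

end NormedGroup

section NormedField

variable {F : Type*} [NormedField F]

lemma preimage_mul_left_closedBall₀ {w : F} (hw : w ≠ 0) (a : F) (r : ℝ) :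
    (w * ·) ⁻¹' closedBall a r = closedBall (w⁻¹ * a) (‖w‖⁻¹ * r) := by
  rw [← norm_inv, ← smul_eq_mul, ← smul_closedBall' (inv_ne_zero hw)]
  exact preimage_smul₀ hw _

variable [MeasurableSpace F] [BorelSpace F] {ν : Measure F}

lemma map_mul_left_eq_smul [IsUltrametricDist F] [SecondCountableTopology F] {q : ℝ} (hq : 1 < q)
    (hdisc : ∀ x : F, x ≠ 0 → ∃ k : ℤ, ‖x‖ = q ^ k)
    (hν : ∀ (a : F) (k : ℤ), ν (closedBall a (q ^ k)) = ENNReal.ofReal (q ^ k))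
    {w : F} (hw : w ≠ 0) : ν.map (w * ·) = ‖w‖ₑ⁻¹ • ν := by
  obtain ⟨t, ht⟩ := hdisc w hw
  have hq0 : 0 < q := zero_lt_one.trans hq
  have hmap (a : F) (k : ℤ) :
      ν.map (w * ·) (closedBall a (q ^ k)) = ENNReal.ofReal (q ^ (k - t)) := by
    rw [Measure.map_apply (measurable_const_mul w) measurableSet_closedBall,
      preimage_mul_left_closedBall₀ hw, ht, ← zpow_neg, ← zpow_add₀ hq0.ne', hν, neg_add_eq_sub]
  refine Measure.ext_of_zpowClosedBalls hq 0 (fun k => by rw [hmap]; exact ENNReal.ofReal_ne_top)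
    fun a k => ?_
  rw [hmap, Measure.smul_apply, smul_eq_mul, hν, ← ofReal_norm, ht,
    ← ENNReal.ofReal_inv_of_pos (zpow_pos hq0 t), ← ENNReal.ofReal_mul (by positivity),
    ← zpow_neg, ← zpow_add₀ hq0.ne', neg_add_eq_sub]

lemma map_mul_left_restrict_closedBall_one {w : F} (hw : w ≠ 0)
    (hν : ν.map (w * ·) = ‖w‖ₑ⁻¹ • ν) :
    (ν.restrict (closedBall 0 1)).map (w * ·) = ‖w‖ₑ⁻¹ • ν.restrict (closedBall 0 ‖w‖) := by
  have hpre : (w * ·) ⁻¹' closedBall 0 ‖w‖ = closedBall 0 1 := by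
    rw [preimage_mul_left_closedBall₀ hw, mul_zero, inv_mul_cancel₀ (norm_ne_zero_iff.2 hw)]
  rw [← hpre, ← Measure.restrict_map (measurable_const_mul w) measurableSet_closedBall, hν,
    Measure.restrict_smul]

lemma map_mul_prod_eq_withDensity [SecondCountableTopology F] {μ : Measure F}
    [SFinite μ] [SFinite ν] (hμ0 : μ {0} = 0)
    (hμ : ∀ w : F, w ≠ 0 → μ.map (w * ·) = ‖w‖ₑ⁻¹ • ν.restrict (closedBall 0 ‖w‖)) :
    (μ.prod μ).map (fun p : F × F => p.1 * p.2)
      = ν.withDensity (fun z => ∫⁻ w in {w | ‖z‖ ≤ ‖w‖}, ‖w‖ₑ⁻¹ ∂μ) := by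
  set f : F → F → ℝ≥0∞ := fun w z => if ‖z‖ ≤ ‖w‖ then ‖w‖ₑ⁻¹ else 0
  have hf : Measurable (Function.uncurry f) :=
    Measurable.ite (measurableSet_le (measurable_norm.comp measurable_snd)
      (measurable_norm.comp measurable_fst)) (measurable_enorm.comp measurable_fst).inv
      measurable_const
  ext s hs
  rw [Measure.map_apply measurable_mul hs, Measure.prod_apply (measurable_mul hs),
    withDensity_apply _ hs]
  calc ∫⁻ w, μ (Prod.mk w ⁻¹' ((fun p : F × F => p.1 * p.2) ⁻¹' s)) ∂μ
      = ∫⁻ w, ∫⁻ z in s, f w z ∂ν ∂μ := by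
        refine lintegral_congr_ae ?_
        filter_upwards [compl_mem_ae_iff.2 hμ0] with w (hw : w ≠ 0)
        have hfw : f w = (closedBall 0 ‖w‖).indicator fun _ => ‖w‖ₑ⁻¹ := by
          ext z
          simp only [f, indicator, mem_closedBall_zero_iff]
        change μ ((w * ·) ⁻¹' s) = _
        rw [← Measure.map_apply (measurable_const_mul w) hs, hμ w hw, hfw,
          lintegral_indicator_const measurableSet_closedBall, Measure.smul_apply, smul_eq_mul,
          Measure.restrict_apply hs, Measure.restrict_apply measurableSet_closedBall, inter_comm]
    _ = ∫⁻ z in s, ∫⁻ w, f w z ∂μ ∂ν := lintegral_lintegral_swap hf.aemeasurable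
    _ = ∫⁻ z in s, ∫⁻ w in {w | ‖z‖ ≤ ‖w‖}, ‖w‖ₑ⁻¹ ∂μ ∂ν := by
        refine lintegral_congr fun z => ?_
        rw [← lintegral_indicator (measurableSet_le measurable_const measurable_norm)]
        rfl

end NormedField

/-- Let `F` be a non-archimedean local field of residue cardinality `ℓ`
(abstracted: an ultrametric normed field whose norm takes values in the powers of `ℓ`),
`μ` the Haar probability measure on `O_F` and `ν` the Haar measure on `F` normalized by
`ν(O_F) = 1`. Then the pushforward of `μ ⊗ μ` under multiplication is supported on
`O_F` and is absolutely continuous with respect to `ν`, with density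
`r(z) = ((ℓ-1)/ℓ)·(val(z)+1)` for `z ∈ O_F \ {0}` (where `val z = -log_ℓ ‖z‖`). -/
theorem mul_pushforward_density (ℓ : ℕ) (hℓ : 2 ≤ ℓ)
    {F : Type*} [NormedField F] [IsUltrametricDist F]
    [MeasurableSpace F] [BorelSpace F] [SecondCountableTopology F]
    (hdisc : ∀ x : F, x ≠ 0 → ∃ k : ℤ, ‖x‖ = (ℓ : ℝ) ^ k)
    (μ ν : Measure F) [IsProbabilityMeasure μ]
    (hμ : ∀ (m : ℕ) (a : F), ‖a‖ ≤ 1 →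
      μ {x : F | ‖x - a‖ ≤ (ℓ : ℝ) ^ (-(m : ℤ))} = (ℓ : ENNReal) ^ (-(m : ℤ)))
    (hν : ∀ (k : ℤ) (a : F), ν {x : F | ‖x - a‖ ≤ (ℓ : ℝ) ^ k} = (ℓ : ENNReal) ^ k) :
    (μ.prod μ).map (fun p : F × F => p.1 * p.2)
      = ν.withDensity (Set.indicator {z : F | ‖z‖ ≤ 1 ∧ z ≠ 0}
          (fun z => ENNReal.ofReal (((ℓ : ℝ) - 1) / ℓ * (-Real.logb ℓ ‖z‖ + 1)))) := by
  have hq : (1 : ℝ) < ℓ := by exact_mod_cast hℓ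
  have hball (a : F) (r : ℝ) : {x : F | ‖x - a‖ ≤ r} = closedBall a r := by
    ext
    rw [mem_closedBall, dist_eq_norm]
    rfl
  have hcast (k : ℤ) : (ℓ : ℝ≥0∞) ^ k = ENNReal.ofReal ((ℓ : ℝ) ^ k) := by
    rw [← NNReal.coe_natCast, ← NNReal.coe_zpow, ENNReal.ofReal_coe_nnreal,
      ENNReal.coe_zpow (by positivity), ENNReal.coe_natCast]
  have hν' (a : F) (k : ℤ) : ν (closedBall a ((ℓ : ℝ) ^ k)) = ENNReal.ofReal ((ℓ : ℝ) ^ k) := by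
    rw [← hball, hν, hcast]
  have hμ' (n : ℕ) (a : F) (ha : ‖a‖ ≤ 1) :
      μ (closedBall a ((ℓ : ℝ) ^ (-(n : ℤ)))) = ENNReal.ofReal ((ℓ : ℝ) ^ (-(n : ℤ))) := by
    rw [← hball, hμ n a ha, hcast]
  have : SigmaFinite ν := (Measure.finiteSpanningSetsInZPowClosedBalls hq 0
    fun k => by rw [hν']; exact ENNReal.ofReal_ne_top).sigmaFinite
  have hν0 : ν {0} = 0 := measure_singleton_zero_of_closedBall_zpow hq (hν' 0)
  rw [eq_restrict_closedBall_one_of_zpow hq hμ' hν', map_mul_prod_eq_withDensity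
    (le_zero_iff.1 ((Measure.restrict_apply_le _ _).trans hν0.le))
    fun w hw => map_mul_left_restrict_closedBall_one hw (map_mul_left_eq_smul hq hdisc hν' hw)]
  exact withDensity_congr_ae (setLIntegral_enorm_inv_norm_le_ae_eq hq hdisc (hν' 0))
end

section
/- Let F be a field of characteristic p with p > n/2. Let y be an n×n matrix over F whose characteristic polynomial is totally inseparable (i.e. has a single root over the algebraic closure) and which is not regular. Then y = z + N for some scalar matrix z over F and some nilpotent matrix N over F. Equivalently: if the characteristic polynomial of y is (x - λ)^n for λ in the algebraic closure, and y is not regular, then λ ∈ F. -/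
/-!
Over the algebraic closure the minimal polynomial of `y` is `(X - λ)^k` with `0 < k < n`, since it
divides the characteristic polynomial `(X - λ)^n` and differs from it. Reading off the
subleading coefficients of these two polynomials defined over `F` shows `kλ ∈ F` and `nλ ∈ F`,
hence `mλ ∈ F` for `m = min k (n - k)`. As `k + (n - k) = n < 2p`, we have `0 < m < p`, so `m` is
invertible in `F` and `λ ∈ F`. Then `y - λ` is nilpotent by Cayley–Hamilton.
-/

open Polynomial

namespace Polynomial

variable {R S : Type*} [CommRing R] [CommRing S]

theorem natCast_mul_mem_range_of_map_eq_X_sub_C_pow {f : R →+* S} (hf : Function.Injective f)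
    {q : R[X]} {a : S} {k : ℕ} (h : q.map f = (X - C a) ^ k) : (k : S) * a ∈ f.range := by
  refine ⟨-q.nextCoeff, ?_⟩
  rw [map_neg, ← nextCoeff_map hf, h, (monic_X_sub_C a).nextCoeff_pow, nextCoeff_X_sub_C,
    nsmul_eq_mul, mul_neg, neg_neg]

theorem map_eq_X_sub_C_pow_natDegree_of_dvd [IsDomain S] {f : R →+* S} {q P : R[X]}
    (hq : q.Monic) (hqP : q ∣ P) {a : S} {n : ℕ} (hP : P.map f = (X - C a) ^ n) :
    q.map f = (X - C a) ^ q.natDegree := by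
  have hdvd : q.map f ∣ (X - C a) ^ n := hP ▸ Polynomial.map_dvd f hqP
  obtain ⟨k, -, hassoc⟩ := (dvd_prime_pow (prime_X_sub_C a) n).mp hdvd
  have hk : q.map f = (X - C a) ^ k :=
    eq_of_monic_of_associated (hq.map f) ((monic_X_sub_C a).pow k) hassoc
  rw [← hq.natDegree_map f, hk, natDegree_pow, natDegree_X_sub_C, mul_one]

end Polynomial

theorem RingHom.mem_range_of_natCast_mul_mem_range {F K : Type*} [Field F] [Field K]
    {f : F →+* K} {a : K} {m : ℕ} (hm : (m : F) ≠ 0) (h : (m : K) * a ∈ f.range) :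
    a ∈ f.range := by
  obtain ⟨b, hb⟩ := h
  refine ⟨b / m, ?_⟩
  have hmK : (m : K) ≠ 0 := by rwa [← map_natCast f, _root_.map_ne_zero]
  rw [map_div₀, hb, map_natCast, mul_div_cancel_left₀ a hmK]

namespace Matrix

variable {ι F : Type*} [Fintype ι] [DecidableEq ι]

theorem natDegree_minpoly_lt_of_minpoly_ne_charpoly [Field F] {y : Matrix ι ι F}
    (h : minpoly F y ≠ y.charpoly) : (minpoly F y).natDegree < Fintype.card ι := by
  by_contra! hle
  exact h (eq_of_monic_of_dvd_of_natDegree_le (minpoly.monic (isIntegral y))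
    y.charpoly_monic (minpoly_dvd_charpoly y) (y.charpoly_natDegree_eq_dim ▸ hle)).symm

theorem isNilpotent_sub_smul_one_of_charpoly_eq [CommRing F] {y : Matrix ι ι F} {c : F}
    (h : y.charpoly = (X - C c) ^ Fintype.card ι) : IsNilpotent (y - c • 1) := by
  refine ⟨Fintype.card ι, ?_⟩
  have := aeval_self_charpoly y
  rwa [h, map_pow, map_sub, aeval_X, aeval_C, Algebra.algebraMap_eq_smul_one] at this

end Matrix

theorem inseparable_nonregular_scalar_general (F : Type*) [Field F] (p n : ℕ) [CharP F p]
    (hpn : n < 2 * p)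
    (y : Matrix (Fin n) (Fin n) F) (lam : AlgebraicClosure F)
    (hchar : (y.map (algebraMap F (AlgebraicClosure F))).charpoly
      = (Polynomial.X - Polynomial.C lam) ^ n)
    (hreg : minpoly F y ≠ y.charpoly) :
    lam ∈ (algebraMap F (AlgebraicClosure F)).range ∧
    ∃ (c : F) (N : Matrix (Fin n) (Fin n) F), IsNilpotent N ∧ y = c • 1 + N := by
  set f := algebraMap F (AlgebraicClosure F)
  have hmap : y.charpoly.map f = (X - C lam) ^ n := by rw [← Matrix.charpoly_map, hchar]
  set k := (minpoly F y).natDegree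
  have hkn : k < n := by simpa using Matrix.natDegree_minpoly_lt_of_minpoly_ne_charpoly hreg
  have : NeZero n := ⟨by omega⟩
  have hk : 0 < k := minpoly.natDegree_pos (Matrix.isIntegral y)
  have hk_mem := natCast_mul_mem_range_of_map_eq_X_sub_C_pow f.injective <|
    map_eq_X_sub_C_pow_natDegree_of_dvd (minpoly.monic (Matrix.isIntegral y))
      (Matrix.minpoly_dvd_charpoly y) hmap
  have hn_mem := natCast_mul_mem_range_of_map_eq_X_sub_C_pow f.injective hmap
  have hm_mem : ((min k (n - k) : ℕ) : AlgebraicClosure F) * lam ∈ f.range := by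
    rcases min_choice k (n - k) with h | h <;> rw [h]
    · exact hk_mem
    · simpa [Nat.cast_sub hkn.le, sub_mul] using sub_mem hn_mem hk_mem
  have hm : ((min k (n - k) : ℕ) : F) ≠ 0 := by
    rw [Ne, CharP.cast_eq_zero_iff F p]
    exact Nat.not_dvd_of_pos_of_lt (by omega) (by omega)
  obtain ⟨c, rfl⟩ := RingHom.mem_range_of_natCast_mul_mem_range hm hm_mem
  refine ⟨⟨c, rfl⟩, c, y - c • 1, Matrix.isNilpotent_sub_smul_one_of_charpoly_eq ?_, by abel⟩
  apply map_injective f f.injective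
  simpa using hmap

/-- Let `F` be a field of characteristic `p` with `p > n/2`. If `y` is an
`n×n` matrix over `F` whose characteristic polynomial over the algebraic closure is
`(x - λ)^n` (i.e. totally inseparable), and `y` is not regular (its minimal polynomial
differs from its characteristic polynomial), then `λ ∈ F`; equivalently, `y` is the sum
of a scalar matrix over `F` and a nilpotent matrix over `F`. -/
theorem inseparable_nonregular_scalar (F : Type*) [Field F] (p n : ℕ) [CharP F p]
    (hp : p.Prime) (hn : 0 < n) (hpn : n < 2 * p)
    (y : Matrix (Fin n) (Fin n) F) (lam : AlgebraicClosure F)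
    (hchar : (y.map (algebraMap F (AlgebraicClosure F))).charpoly
      = (Polynomial.X - Polynomial.C lam) ^ n)
    (hreg : minpoly F y ≠ y.charpoly) :
    lam ∈ (algebraMap F (AlgebraicClosure F)).range ∧
    ∃ (c : F) (N : Matrix (Fin n) (Fin n) F), IsNilpotent N ∧ y = c • 1 + N :=
  inseparable_nonregular_scalar_general F p n hpn y lam hchar hreg
end

section
/- Let k be a field with char(k) > n/2, let O be a non-regular nilpotent conjugation orbit in gl_n over the algebraic closure, defined over k, and let z denote the scalar matrices. Then for any field extension E/k, every E-point of the variety z + O (the Minkowski sum) decomposes as a sum of an E-scalar matrix and an E-point of O: (z + O)(E) = z(E) + O(E). -/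
section Aux

variable {E K : Type*} [Field E] [Field K] [Algebra E K]

private lemma map_smul_one_aux (n : ℕ) (c : E) :
    (c • (1 : Matrix (Fin n) (Fin n) E)).map (algebraMap E K) = (algebraMap E K c) • 1 := by
  ext i j
  by_cases h : i = j <;> simp [Matrix.map_apply, Matrix.one_apply, h]

private lemma map_pow_aux (n : ℕ) (y : Matrix (Fin n) (Fin n) E) (j : ℕ) :
    (y ^ j).map (algebraMap E K) = (y.map (algebraMap E K)) ^ j := by
  simp only [← RingHom.mapMatrix_apply, map_pow]

end Aux

/-- Let `k` be a field with `char k > n/2`, `O` the conjugation orbit (over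
the algebraic closure `K`) of a non-regular nilpotent matrix `N₀` defined over `k`, and
`z` the scalar matrices. Then every `E`-point of the Minkowski sum `z + O` decomposes over
`E`: if a matrix `y` over an intermediate field `E` satisfies `y = λ·1 + N` over `K` with
`N` in the orbit of `N₀`, then `y = c·1 + N'` with `c ∈ E` and `N'` an `E`-matrix mapping
to `N` (so `N'` is an `E`-point of `O`). -/
theorem minkowski_sum_points (k E K : Type*) [Field k] [Field E] [Field K]
    [Algebra k E] [Algebra k K] [Algebra E K] [IsScalarTower k E K] [IsAlgClosed K]
    (p n : ℕ) [CharP k p] (hp : p.Prime) (hn : 0 < n) (hpn : n < 2 * p)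
    (N₀ : Matrix (Fin n) (Fin n) k) (hnil : IsNilpotent N₀) (hnonreg : N₀ ^ (n - 1) = 0)
    (y : Matrix (Fin n) (Fin n) E) (lam : K) (N : Matrix (Fin n) (Fin n) K)
    (hconj : ∃ g : GL (Fin n) K, N = g.1 * (N₀.map (algebraMap k K)) * (g⁻¹).1)
    (hy : y.map (algebraMap E K) = lam • 1 + N) :
    ∃ (c : E) (N' : Matrix (Fin n) (Fin n) E),
      N'.map (algebraMap E K) = N ∧ y = c • 1 + N' := by
  classical
  haveI := Fact.mk hp
  haveI : CharP E p := charP_of_injective_algebraMap (algebraMap k E).injective p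
  haveI : CharP K p := charP_of_injective_algebraMap (algebraMap k K).injective p
  haveI : NeZero n := ⟨hn.ne'⟩
  set f := algebraMap E K with hf
  -- it suffices to show that `lam` comes from `E`
  suffices hlam : ∃ c : E, f c = lam by
    obtain ⟨c, hc⟩ := hlam
    refine ⟨c, y - c • 1, ?_, by abel⟩
    have : (y - c • 1).map f = y.map f - (c • (1 : Matrix (Fin n) (Fin n) E)).map f := by
      simp only [← RingHom.mapMatrix_apply, map_sub]
    rw [this, map_smul_one_aux, hc, hy]
    abel
  -- `N` is nilpotent with `N ^ (n-1) = 0`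
  have hNpow : N ^ (n - 1) = 0 := by
    obtain ⟨g, hg⟩ := hconj
    rw [hg, Units.conj_pow]
    have : (N₀.map (algebraMap k K)) ^ (n - 1) = (N₀ ^ (n - 1)).map (algebraMap k K) := by
      simp only [← RingHom.mapMatrix_apply, map_pow]
    rw [this, hnonreg]
    simp
  have hNnil : IsNilpotent N := ⟨n - 1, hNpow⟩
  by_cases hdvd : p ∣ n
  · -- case `p ∣ n`, so `n = p`
    have hnp : n = p := by
      obtain ⟨t, rfl⟩ := hdvd
      rcases t with _ | _ | t
      · simp at hn
      · simp
      · exfalso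
        have : p * (t + 1 + 1) = p * t + p * 2 := by ring
        omega
    subst hnp
    -- from here on, the characteristic equals `n`
    have hn2 : 2 ≤ n := hp.two_le
    -- `N ^ n = 0`
    have hNp : N ^ n = 0 := by
      have h0 := pow_succ N (n - 1)
      rw [Nat.sub_add_cancel (by omega : 1 ≤ n)] at h0
      rw [h0, hNpow, zero_mul]
    -- `(y.map f) ^ n = lam ^ n • 1`
    have hyp : (y.map f) ^ n = lam ^ n • 1 := by
      rw [hy, add_pow_char_of_commute n ((Commute.one_left N).smul_left lam), hNp,
        add_zero, smul_pow, one_pow]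
    set i₀ : Fin n := ⟨0, hn⟩ with hi₀
    set c₀ : E := (y ^ n) i₀ i₀ with hc₀
    have hfc₀ : f c₀ = lam ^ n := by
      have h1 : (y ^ n).map f = lam ^ n • 1 := by rw [map_pow_aux, hyp]
      have h2 := congrFun (congrFun h1 i₀) i₀
      simpa [Matrix.map_apply, Matrix.one_apply] using h2
    -- `lam` is integral over `E`, a root of `X^n - C c₀`
    have hroot : (Polynomial.aeval lam) (Polynomial.X ^ n - Polynomial.C c₀) = 0 := by
      rw [map_sub, map_pow, Polynomial.aeval_X, Polynomial.aeval_C,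
        show (algebraMap E K) c₀ = f c₀ from rfl, hfc₀, sub_self]
    have hmonic : (Polynomial.X ^ n - Polynomial.C c₀).Monic :=
      Polynomial.monic_X_pow_sub_C _ (by omega)
    have hint : IsIntegral E lam := ⟨Polynomial.X ^ n - Polynomial.C c₀, hmonic, hroot⟩
    set μ := minpoly E lam with hμ
    have hμdvd : μ ∣ Polynomial.X ^ n - Polynomial.C c₀ := minpoly.dvd E lam hroot
    -- the image of `μ` in `K[X]` is `(X - C lam) ^ e` where `e = μ.natDegree`
    have hmapdvd : μ.map f ∣ (Polynomial.X - Polynomial.C lam) ^ n := by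
      have h2 : (Polynomial.X ^ n - Polynomial.C c₀).map (f : E →+* K)
          = (Polynomial.X - Polynomial.C lam) ^ n := by
        rw [Polynomial.map_sub, Polynomial.map_pow, Polynomial.map_X, Polynomial.map_C,
          show f c₀ = lam ^ n from hfc₀, sub_pow_char, ← Polynomial.C_pow]
      exact h2 ▸ Polynomial.map_dvd (f : E →+* K) hμdvd
    obtain ⟨e, he, hassoc⟩ := (dvd_prime_pow (Polynomial.prime_X_sub_C lam) n).mp hmapdvd
    have hμmap : μ.map f = (Polynomial.X - Polynomial.C lam) ^ e :=
      Polynomial.eq_of_monic_of_associated ((minpoly.monic hint).map f)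
        ((Polynomial.monic_X_sub_C lam).pow e) hassoc
    have hdeg : μ.natDegree = e := by
      have h3 := congrArg Polynomial.natDegree hμmap
      rwa [(minpoly.monic hint).natDegree_map,
        Polynomial.natDegree_pow, Polynomial.natDegree_X_sub_C, mul_one] at h3
    have he1 : 1 ≤ e := hdeg ▸ minpoly.natDegree_pos hint
    by_cases hep : e < n
    · -- extract `lam` from the subleading coefficient of `μ`
      have hchoose : e.choose (e - 1) = e := by
        rw [Nat.choose_symm (by omega : 1 ≤ e), Nat.choose_one_right]
      have hcoeff : f (μ.coeff (e - 1)) = (-lam) * (e : K) := by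
        have h3 : (μ.map f).coeff (e - 1) = f (μ.coeff (e - 1)) := Polynomial.coeff_map _ _
        rw [hμmap] at h3
        have h4 : ((Polynomial.X - Polynomial.C lam) ^ e).coeff (e - 1)
            = (-lam) ^ (e - (e - 1)) * (e.choose (e - 1) : K) := by
          rw [sub_eq_add_neg, ← Polynomial.C_neg]
          exact Polynomial.coeff_X_add_C_pow _ _ _
        rw [h4] at h3
        rw [← h3, show e - (e - 1) = 1 by omega, pow_one, hchoose]
      have hecast : (e : K) ≠ 0 := by
        rw [Ne, CharP.cast_eq_zero_iff K n]
        intro hpe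
        exact absurd (Nat.le_of_dvd (by omega) hpe) (by omega)
      refine ⟨-(μ.coeff (e - 1)) / (e : E), ?_⟩
      rw [map_div₀, map_neg, hcoeff, map_natCast]
      field_simp
    · -- `e = n`: contradiction with `(y.map f - lam • 1) ^ (n - 1) = 0`
      exfalso
      have hep' : e = n := by omega
      -- expand `N ^ (n-1) = 0` via the binomial theorem
      have hNe : ((-lam) • (1 : Matrix (Fin n) (Fin n) K) + y.map f) ^ (n - 1) = 0 := by
        have h5 : (-lam) • (1 : Matrix (Fin n) (Fin n) K) + y.map f = N := by
          rw [hy, neg_smul]; abel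
        rw [h5, hNpow]
      rw [Commute.add_pow ((Commute.one_left (y.map f)).smul_left (-lam))] at hNe
      -- build the polynomial over `E` with the same coefficients
      set P : Polynomial E := ∑ i ∈ Finset.range (n - 1 + 1),
        Polynomial.C ((-1 : E) ^ i * ((y ^ (n - 1 - i)) i₀ i₀) * ((n-1).choose i : E))
          * Polynomial.X ^ i with hP
      have haevalP : Polynomial.aeval lam P = 0 := by
        have hentry := congrFun (congrFun hNe i₀) i₀
        rw [hP, map_sum]
        rw [show (0 : Matrix (Fin n) (Fin n) K) i₀ i₀ = 0 from rfl] at hentry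
        rw [Matrix.sum_apply] at hentry
        rw [← hentry]
        apply Finset.sum_congr rfl
        intro i _
        have h5 : ((-lam) • (1 : Matrix (Fin n) (Fin n) K)) ^ i = ((-lam) ^ i) • 1 := by
          rw [smul_pow, one_pow]
        rw [h5]
        have h6 : (((-lam) ^ i) • (1 : Matrix (Fin n) (Fin n) K)) * (y.map f) ^ (n - 1 - i)
            * ((n-1).choose i : Matrix (Fin n) (Fin n) K)
            = ((-lam) ^ i * ((n-1).choose i : K)) • ((y.map f) ^ (n - 1 - i)) := by
          rw [smul_mul_assoc, one_mul]
          rw [show ((n-1).choose i : Matrix (Fin n) (Fin n) K)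
            = (((n-1).choose i : K)) • (1 : Matrix (Fin n) (Fin n) K) by
              simp [Matrix.smul_one_eq_diagonal, Matrix.diagonal_natCast]]
          rw [Matrix.mul_smul, mul_one, smul_smul, mul_comm ((-lam) ^ i), ← smul_smul,
            smul_smul, mul_comm]
        rw [h6, Matrix.smul_apply, ← map_pow_aux, Matrix.map_apply]
        simp only [map_mul, map_pow, map_neg, map_one, map_natCast, Polynomial.aeval_C,
          Polynomial.aeval_X, smul_eq_mul]
        ring
      -- hence `μ ∣ P`, but `deg P < n = deg μ`, so `P = 0`
      have hPzero : P = 0 := by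
        by_contra hP0
        have hdvdP : μ ∣ P := minpoly.dvd E lam haevalP
        have h7 := Polynomial.natDegree_le_of_dvd hdvdP hP0
        rw [hdeg, hep'] at h7
        have hdegP : P.natDegree ≤ n - 1 := by
          apply Polynomial.natDegree_sum_le_of_forall_le
          intro i hi
          refine (Polynomial.natDegree_C_mul_le _ _).trans ?_
          simp only [Polynomial.natDegree_X_pow]
          simp only [Finset.mem_range] at hi
          omega
        omega
      -- but the top coefficient of `P` is `±1 ≠ 0`
      have htop : P.coeff (n - 1) = (-1 : E) ^ (n - 1) := by
        rw [hP, Polynomial.finset_sum_coeff]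
        rw [Finset.sum_eq_single (n - 1)]
        · simp only [Nat.sub_self, pow_zero, Matrix.one_apply_eq, Nat.choose_self,
            Nat.cast_one, mul_one, one_mul]
          rw [Polynomial.coeff_C_mul, Polynomial.coeff_X_pow, if_pos rfl, mul_one]
        · intro i hi hne
          rw [Polynomial.coeff_C_mul, Polynomial.coeff_X_pow, if_neg (by omega), mul_zero]
        · intro h
          exact absurd (Finset.self_mem_range_succ (n-1)) h
      rw [hPzero] at htop
      simp only [Polynomial.coeff_zero] at htop
      exact pow_ne_zero _ (neg_ne_zero.mpr (one_ne_zero : (1 : E) ≠ 0)) htop.symm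
  · -- case `p ∤ n`: use the trace
    have htrN : Matrix.trace N = 0 :=
      (Matrix.isNilpotent_trace_of_isNilpotent hNnil).eq_zero
    have htr : f (Matrix.trace y) = (n : K) * lam := by
      have h1 : Matrix.trace (y.map f) = f (Matrix.trace y) := by
        simp [Matrix.trace, Matrix.diag, Matrix.map_apply, map_sum]
      rw [← h1, hy, Matrix.trace_add, Matrix.trace_smul, Matrix.trace_one, htrN, add_zero]
      simp [mul_comm]
    have hncast : (n : K) ≠ 0 := by
      rw [Ne, CharP.cast_eq_zero_iff K p]
      exact hdvd
    refine ⟨Matrix.trace y / (n : E), ?_⟩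
    rw [map_div₀, map_natCast, htr]
    field_simp
end

section
/- Let k be a field, N ⊂ gl_n the nilpotent cone, and z ⊂ gl_n the line of scalar matrices. The addition map add: N × z → gl_n, (N, z) ↦ N + z, is a finite morphism of varieties. -/
/-!
Write `c` for the scalar coordinate on `N × z` and `A` for the matrix of the remaining
coordinates. The generic matrix of `gl_n` pulls back to `A + c • 1`, and `det A = 0` on `N`, so
`c` is a root of the monic characteristic polynomial of the generic matrix: it is integral over
`k[gl_n]`. The entries of `A` are pulled-back coordinates minus multiples of `c`, so the
coordinate ring of `N × z` is generated over `k[gl_n]` by `c` alone, hence is finite.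
-/

open MvPolynomial Polynomial

theorem Matrix.det_eq_zero_of_isNilpotent {ι R : Type*} [Fintype ι] [DecidableEq ι] [Nonempty ι]
    [CommRing R] [IsReduced R] {M : Matrix ι ι R} (hM : IsNilpotent M) : M.det = 0 := by
  obtain ⟨m, hm⟩ := hM
  exact IsNilpotent.eq_zero ⟨m, by rw [← det_pow, hm, det_zero]⟩

theorem RingHom.isIntegralElem_of_det_map_sub_scalar_eq_zero {ι A B : Type*} [Fintype ι]
    [DecidableEq ι] [CommRing A] [CommRing B] (f : A →+* B) (M : Matrix ι ι A) {c : B}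
    (h : (M.map f - Matrix.scalar ι c).det = 0) : f.IsIntegralElem c := by
  refine ⟨M.charpoly, M.charpoly_monic, ?_⟩
  rw [Polynomial.eval₂_eq_eval_map, ← Matrix.charpoly_map, Matrix.eval_charpoly, ← neg_sub,
    Matrix.det_neg, h, mul_zero]

theorem RingHom.finite_of_isIntegralElem_of_surjective_eval₂RingHom {A B : Type*} [CommRing A]
    [CommRing B] {f : A →+* B} {c : B} (hc : f.IsIntegralElem c)
    (hsurj : Function.Surjective (eval₂RingHom f c)) : f.Finite := by
  algebraize [f]
  have htop : Algebra.adjoin A {c} = ⊤ := by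
    rw [Algebra.adjoin_singleton_eq_range_aeval, AlgHom.range_eq_top]
    exact hsurj
  exact ⟨by simpa [htop] using IsIntegral.fg_adjoin_singleton hc⟩

namespace MvPolynomial

theorem det_mem_vanishingIdeal_isNilpotent {k σ ι : Type*} [Field k] [Fintype ι] [DecidableEq ι]
    [Nonempty ι] (e : ι → ι → σ) :
    (Matrix.of fun i j => (X (e i j) : MvPolynomial σ k)).det ∈
      vanishingIdeal k {v : σ → k | IsNilpotent (Matrix.of fun i j => v (e i j))} := by
  rw [mem_vanishingIdeal_iff]
  intro v (hv : IsNilpotent _)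
  rw [AlgHom.map_det]
  refine Matrix.det_eq_zero_of_isNilpotent ?_
  convert hv using 2
  ext i j
  simp

variable (k ι : Type*) [CommRing k] [DecidableEq ι]

/-- Pullback of coordinates along `(A, c) ↦ A + c • 1`, where the variable `inl (i, j)` is the
entry `A i j` and `inr ()` is the scalar `c`. -/
noncomputable def comapAddScalar : MvPolynomial (ι × ι) k →ₐ[k] MvPolynomial ((ι × ι) ⊕ Unit) k :=
  aeval fun q => X (.inl q) + if q.1 = q.2 then X (.inr ()) else 0

variable {k ι}

theorem comapAddScalar_X (q : ι × ι) :
    comapAddScalar k ι (X q) = X (.inl q) + if q.1 = q.2 then X (.inr ()) else 0 :=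
  aeval_X _ _

theorem surjective_eval₂RingHom_comapAddScalar :
    Function.Surjective (eval₂RingHom (comapAddScalar k ι).toRingHom (X (.inr ()))) := by
  let inv : MvPolynomial ((ι × ι) ⊕ Unit) k →ₐ[k] (MvPolynomial (ι × ι) k)[X] :=
    aeval (Sum.elim (fun q => Polynomial.C (X q) - if q.1 = q.2 then Polynomial.X else 0)
      fun _ => Polynomial.X)
  suffices (eval₂RingHom (comapAddScalar k ι).toRingHom (X (.inr ()))).comp inv.toRingHom =
      RingHom.id _ from fun p => ⟨inv p, RingHom.congr_fun this p⟩
  refine ringHom_ext (fun a => ?_) fun s => ?_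
  · simp [inv]
  · rcases s with q | u
    · by_cases h : q.1 = q.2 <;> simp [inv, comapAddScalar_X, h]
    · simp [inv]

theorem mvPolynomialX_map_comapAddScalar_sub_scalar [Fintype ι] {S : Type*} [CommRing S]
    (g : MvPolynomial ((ι × ι) ⊕ Unit) k →+* S) :
    (Matrix.mvPolynomialX ι ι k).map (g.comp (comapAddScalar k ι).toRingHom) -
        Matrix.scalar ι (g (X (.inr ()))) =
      (Matrix.of fun i j => X (.inl (i, j))).map g := by
  ext i j
  by_cases h : i = j <;> simp [comapAddScalar_X, h]

end MvPolynomial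

/-- The addition map `add : N × z → gl_n`, from the product of the nilpotent
cone and the line of scalar matrices to `gl_n`, is a finite morphism: the induced map from
the coordinate ring `k[gl_n]` to the coordinate ring of the variety `N × z`
(the polynomial ring on `(Fin n × Fin n) ⊕ Unit` modulo the vanishing ideal of
`{(A, c) : A nilpotent}`), sending the coordinate `x_{ij}` to `X_{ij} + δ_{ij}·c`,
is a finite ring homomorphism. -/
theorem addition_map_finite (k : Type*) [Field k] (n : ℕ) (hn : 0 < n) :
    RingHom.Finite
      ((Ideal.Quotient.mk (MvPolynomial.vanishingIdeal k
          {v : (Fin n × Fin n) ⊕ Unit → k |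
            IsNilpotent (Matrix.of fun i j : Fin n => v (Sum.inl (i, j)))})).comp
        ((MvPolynomial.aeval (R := k) (fun q : Fin n × Fin n =>
          (MvPolynomial.X (Sum.inl q) : MvPolynomial ((Fin n × Fin n) ⊕ Unit) k)
            + if q.1 = q.2 then MvPolynomial.X (Sum.inr ()) else 0)
          : MvPolynomial (Fin n × Fin n) k →ₐ[k]
              MvPolynomial ((Fin n × Fin n) ⊕ Unit) k).toRingHom)) := by
  have : Nonempty (Fin n) := ⟨⟨0, hn⟩⟩
  set mk := Ideal.Quotient.mk (vanishingIdeal k {v : (Fin n × Fin n) ⊕ Unit → k |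
    IsNilpotent (Matrix.of fun i j : Fin n => v (Sum.inl (i, j)))})
  refine RingHom.finite_of_isIntegralElem_of_surjective_eval₂RingHom
    (f := mk.comp (comapAddScalar k (Fin n)).toRingHom) (c := mk (X (.inr ()))) ?_ ?_
  · refine (mk.comp _).isIntegralElem_of_det_map_sub_scalar_eq_zero (Matrix.mvPolynomialX _ _ k) ?_
    rw [mvPolynomialX_map_comapAddScalar_sub_scalar, ← RingHom.mapMatrix_apply, ← RingHom.map_det,
      Ideal.Quotient.eq_zero_iff_mem]
    exact det_mem_vanishingIdeal_isNilpotent _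
  · intro b
    obtain ⟨p, rfl⟩ := Ideal.Quotient.mk_surjective b
    obtain ⟨r, rfl⟩ := surjective_eval₂RingHom_comapAddScalar p
    exact ⟨r, (Polynomial.hom_eval₂ ..).symm⟩
end
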